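/- arXiv:2506.22401 — 3 statements merged into one kernel-verified Lean document; each statement's English description precedes it below -/
import Mathlib

section
/- Let softmax : ℝᵈ → Δᵈ be defined by softmax(x)ᵢ = exp(xᵢ) / Σⱼ exp(xⱼ). Then for all x, y ∈ ℝᵈ, ‖softmax(x) − softmax(y)‖₁ ≤ 2‖x − y‖_∞. -/
/-!
Clearing denominators, `softmax x i - softmax y i` is `∑ⱼ (e^{xᵢ + yⱼ} - e^{xⱼ + yᵢ})` divided by
`(∑ⱼ e^{xⱼ}) (∑ⱼ e^{yⱼ})`. Each summand is bounded through `|eᵘ - eᵛ| ≤ (eᵘ + eᵛ)/2 · |u - v|`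
(the logarithmic mean is at most the arithmetic mean), and `|(xᵢ + yⱼ) - (xⱼ + yᵢ)| ≤ 2‖x - y‖_∞`.
Summed over all pairs `(i, j)`, the weights `e^{xᵢ + yⱼ} + e^{xⱼ + yᵢ}` add up to exactly twice
the denominator.
-/

open Finset Real

lemma one_sub_exp_add_mul_exp_nonneg (t : ℝ) : 0 ≤ 1 - exp t + t * exp t := by
  have h := mul_le_mul_of_nonneg_left (add_one_le_exp (-t)) (exp_pos t).le
  rw [← exp_add, add_neg_cancel, exp_zero] at h
  linarith

lemma two_mul_exp_sub_one_le (s : ℝ) (hs : 0 ≤ s) : 2 * (exp s - 1) ≤ s * (exp s + 1) := by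
  let g : ℝ → ℝ := fun t => t * (exp t + 1) - 2 * (exp t - 1)
  have hg (t : ℝ) : HasDerivAt g (1 - exp t + t * exp t) t :=
    (((hasDerivAt_id' t).mul ((hasDerivAt_exp t).add_const 1)).sub
      (((hasDerivAt_exp t).sub_const 1).const_mul 2)).congr_deriv (by ring)
  have hmono : MonotoneOn g (Set.Ici 0) :=
    monotoneOn_of_deriv_nonneg (convex_Ici 0) (by fun_prop)
      (fun t _ => (hg t).differentiableAt.differentiableWithinAt)
      fun t _ => (hg t).deriv ▸ one_sub_exp_add_mul_exp_nonneg t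
  have := hmono Set.self_mem_Ici hs hs
  simp only [g, exp_zero] at this
  linarith

lemma abs_exp_sub_exp_le (u v : ℝ) : |exp u - exp v| ≤ (exp u + exp v) / 2 * |u - v| := by
  wlog h : v ≤ u generalizing u v
  · rw [abs_sub_comm, add_comm, abs_sub_comm u]
    exact this v u (le_of_not_ge h)
  have key := two_mul_exp_sub_one_le (u - v) (sub_nonneg.mpr h)
  rw [abs_of_nonneg (sub_nonneg.mpr (exp_le_exp.mpr h)), abs_of_nonneg (sub_nonneg.mpr h),
    show exp u = exp v * exp (u - v) by rw [← exp_add, add_sub_cancel]]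
  nlinarith [exp_pos v]

section Softmax

variable {ι : Type*} [Fintype ι]

noncomputable def softmax (x : ι → ℝ) (i : ι) : ℝ :=
  exp (x i) / ∑ j, exp (x j)

lemma softmax_sub_softmax [Nonempty ι] (x y : ι → ℝ) (i : ι) :
    softmax x i - softmax y i =
      (∑ j, (exp (x i + y j) - exp (x j + y i))) / ((∑ j, exp (x j)) * ∑ j, exp (y j)) := by
  have hx : 0 < ∑ j, exp (x j) := sum_pos (fun j _ => exp_pos _) univ_nonempty
  have hy : 0 < ∑ j, exp (y j) := sum_pos (fun j _ => exp_pos _) univ_nonempty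
  simp only [softmax, exp_add, sum_sub_distrib, ← mul_sum, ← sum_mul]
  field_simp

lemma sum_sum_exp_add_add_exp_add (x y : ι → ℝ) :
    ∑ i, ∑ j, (exp (x i + y j) + exp (x j + y i)) = 2 * ((∑ j, exp (x j)) * ∑ j, exp (y j)) := by
  simp only [sum_add_distrib, exp_add, sum_mul_sum]
  rw [sum_comm (f := fun i j => exp (x j) * exp (y i))]
  ring

lemma sum_abs_softmax_sub_softmax_le [Nonempty ι] (x y : ι → ℝ) {M : ℝ}
    (hM : ∀ i, |x i - y i| ≤ M) :
    ∑ i, |softmax x i - softmax y i| ≤ 2 * M := by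
  set D := (∑ j, exp (x j)) * ∑ j, exp (y j)
  have hD : 0 < D := mul_pos (sum_pos (fun j _ => exp_pos _) univ_nonempty)
    (sum_pos (fun j _ => exp_pos _) univ_nonempty)
  have hpair (i j : ι) :
      |exp (x i + y j) - exp (x j + y i)| ≤ (exp (x i + y j) + exp (x j + y i)) * M := by
    calc |exp (x i + y j) - exp (x j + y i)|
        ≤ (exp (x i + y j) + exp (x j + y i)) / 2 * |(x i - y i) - (x j - y j)| := by
          simpa only [show x i + y j - (x j + y i) = (x i - y i) - (x j - y j) by ring]
            using abs_exp_sub_exp_le (x i + y j) (x j + y i)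
      _ ≤ (exp (x i + y j) + exp (x j + y i)) / 2 * (2 * M) := by
          gcongr
          linarith [abs_sub (x i - y i) (x j - y j), hM i, hM j]
      _ = (exp (x i + y j) + exp (x j + y i)) * M := by ring
  calc ∑ i, |softmax x i - softmax y i|
      = ∑ i, |∑ j, (exp (x i + y j) - exp (x j + y i))| / D := by
        simp only [softmax_sub_softmax, abs_div, abs_of_pos hD, D]
    _ ≤ ∑ i, (∑ j, (exp (x i + y j) + exp (x j + y i)) * M) / D := by
        refine sum_le_sum fun i _ => div_le_div_of_nonneg_right ?_ hD.le
        exact (abs_sum_le_sum_abs _ _).trans (sum_le_sum fun j _ => hpair i j)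
    _ = 2 * M := by
        simp only [← sum_div, ← sum_mul]
        rw [sum_sum_exp_add_add_exp_add]
        change 2 * D * M / D = 2 * M
        field_simp

end Softmax

/-- The softmax function is 2-Lipschitz from (ℝᵈ, ‖·‖_∞) to (Δᵈ, ‖·‖₁). -/
theorem stmt_2 (d : ℕ) (hd : 0 < d) (x y : Fin d → ℝ) :
    haveI : Nonempty (Fin d) := Fin.pos_iff_nonempty.mp hd
    ∑ i, |Real.exp (x i) / ∑ j, Real.exp (x j) - Real.exp (y i) / ∑ j, Real.exp (y j)|
      ≤ 2 * (univ.sup' univ_nonempty fun j => |x j - y j|) := by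
  have : Nonempty (Fin d) := Fin.pos_iff_nonempty.mp hd
  exact sum_abs_softmax_sub_softmax_le x y fun i => le_sup' (fun j => |x j - y j|) (mem_univ i)
end

section
/- Let X ⊆ ℝᵈ with sup_{x∈X} ‖x‖₂ ≤ B. Then for any n ∈ ℕ₊ and any λ > 0 and any x₁,…,xₙ ∈ X, log det(I_d + (1/λ) Σ_{i=1}^{n} xᵢxᵢᵀ) ≤ d log(1 + nB²/(dλ)). -/
/-!
The matrix `I + λ⁻¹ ∑ xᵢxᵢᵀ` is positive definite, so its log-determinant is the sum of the
logarithms of its eigenvalues. By concavity of `log` this is at most `d` times the logarithm of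
their mean, i.e. of `trace / d = 1 + (∑ ‖xᵢ‖²) / (dλ)`, and `∑ ‖xᵢ‖² ≤ nB²`.
-/

open Finset Matrix

theorem Real.sum_log_le_card_mul_log_mean {ι : Type*} (s : Finset ι) (hs : s.Nonempty)
    {a : ι → ℝ} (ha : ∀ i ∈ s, 0 < a i) :
    ∑ i ∈ s, Real.log (a i) ≤ #s * Real.log ((∑ i ∈ s, a i) / #s) := by
  have hcard : (0 : ℝ) < #s := by exact_mod_cast hs.card_pos
  have hjensen := strictConcaveOn_log_Ioi.concaveOn.le_map_sum (t := s) (w := fun _ ↦ (#s : ℝ)⁻¹)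
    (p := a) (fun _ _ ↦ by positivity) (by simp [hcard.ne']) ha
  simp only [smul_eq_mul, ← Finset.mul_sum] at hjensen
  rw [div_eq_inv_mul]
  calc ∑ i ∈ s, Real.log (a i) = #s * ((#s : ℝ)⁻¹ * ∑ i ∈ s, Real.log (a i)) := by
        field_simp
    _ ≤ #s * Real.log ((#s : ℝ)⁻¹ * ∑ i ∈ s, a i) := by gcongr

theorem Matrix.PosDef.log_det_le_card_mul_log_trace_div {ι : Type*} [Fintype ι] [Nonempty ι]
    [DecidableEq ι] {A : Matrix ι ι ℝ} (hA : A.PosDef) :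
    Real.log A.det ≤ Fintype.card ι * Real.log (A.trace / Fintype.card ι) := by
  rw [hA.isHermitian.det_eq_prod_eigenvalues, hA.isHermitian.trace_eq_sum_eigenvalues]
  simp only [RCLike.ofReal_real_eq_id, id]
  rw [Real.log_prod fun i _ ↦ (hA.eigenvalues_pos i).ne']
  exact Real.sum_log_le_card_mul_log_mean univ univ_nonempty fun i _ ↦ hA.eigenvalues_pos i

section Gram

variable {ι κ : Type*} [Fintype ι] [Fintype κ] [DecidableEq κ]

theorem Matrix.posDef_one_add_smul_sum_vecMulVec_self {c : ℝ} (hc : 0 ≤ c) (x : ι → κ → ℝ) :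
    (1 + c • ∑ i, vecMulVec (x i) (x i)).PosDef :=
  PosDef.one.add_posSemidef <| .smul (posSemidef_sum _ fun i _ ↦ by
    simpa using posSemidef_vecMulVec_self_star (x i)) hc

theorem Matrix.trace_one_add_smul_sum_vecMulVec_self (c : ℝ) (x : ι → κ → ℝ) :
    (1 + c • ∑ i, vecMulVec (x i) (x i)).trace = Fintype.card κ + c * ∑ i, x i ⬝ᵥ x i := by
  simp [trace_sum]

end Gram

theorem stmt_5_general (d n : ℕ) (hd : 0 < d) (B lam : ℝ) (hlam : 0 < lam)
    (x : Fin n → Fin d → ℝ)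
    (hx : ∀ i, Real.sqrt (∑ j, (x i j) ^ 2) ≤ B) :
    Real.log ((1 + (1 / lam) • ∑ i, vecMulVec (x i) (x i) : Matrix (Fin d) (Fin d) ℝ).det)
      ≤ d * Real.log (1 + n * B ^ 2 / (d * lam)) := by
  have : NeZero d := ⟨hd.ne'⟩
  have hnorm (i : Fin n) : x i ⬝ᵥ x i ≤ B ^ 2 := by
    simpa [dotProduct, sq] using (Real.sqrt_le_iff.mp (hx i)).2
  have hsum : ∑ i, x i ⬝ᵥ x i ≤ n * B ^ 2 := by
    simpa using Finset.sum_le_sum fun i (_ : i ∈ univ) ↦ hnorm i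
  have hnonneg : 0 ≤ ∑ i, x i ⬝ᵥ x i :=
    sum_nonneg fun i _ ↦ by simpa using dotProduct_star_self_nonneg (x i)
  have hposDef := posDef_one_add_smul_sum_vecMulVec_self (one_div_pos.mpr hlam).le x
  calc _ ≤ d * Real.log ((1 + (1 / lam) • ∑ i, vecMulVec (x i) (x i)).trace / d) := by
        simpa using hposDef.log_det_le_card_mul_log_trace_div
    _ = d * Real.log (1 + (∑ i, x i ⬝ᵥ x i) / (d * lam)) := by
        rw [trace_one_add_smul_sum_vecMulVec_self, Fintype.card_fin]
        field_simp
    _ ≤ d * Real.log (1 + n * B ^ 2 / (d * lam)) := by gcongr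

/-- Information gain bound: if ‖xᵢ‖₂ ≤ B then
log det(I_d + (1/λ) Σᵢ xᵢxᵢᵀ) ≤ d log(1 + nB²/(dλ)). -/
theorem stmt_5 (d n : ℕ) (hd : 0 < d) (hn : 0 < n) (B lam : ℝ) (hlam : 0 < lam)
    (x : Fin n → Fin d → ℝ)
    (hx : ∀ i, Real.sqrt (∑ j, (x i j) ^ 2) ≤ B) :
    Real.log ((1 + (1 / lam) • ∑ i, vecMulVec (x i) (x i) : Matrix (Fin d) (Fin d) ℝ).det)
      ≤ d * Real.log (1 + n * B ^ 2 / (d * lam)) :=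
  stmt_5_general d n hd B lam hlam x hx
end

section
/- Let {X_t}_{t≤T} be a real-valued martingale difference sequence adapted to a filtration {F_t}, with |X_t| ≤ R almost surely. Then for any η ∈ (0, 1/R) and δ ∈ (0,1), with probability at least 1 − δ, Σ_{t=1}^{T} X_t ≤ C·(η·Σ_{t=1}^{T} E[X_t² | F_{t-1}] + log(1/δ)/η) for an absolute constant C. -/
/-!
Freedman's inequality holds with `C = 1`. Write `Sₙ = ∑_{t ≤ n} X_t` and `Vₙ = ∑_{t ≤ n} c_t` with
`c_t = E[X_t² | F_{t-1}]`. Since `|η X_t| ≤ 1`, `exp (η X_t) ≤ 1 + η X_t + η² X_t²`, and as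
`E[X_t | F_{t-1}] = 0` this gives `E[exp (η X_t) | F_{t-1}] ≤ 1 + η² c_t ≤ exp (η² c_t)`. Hence
`exp (η Sₙ - η² Vₙ)` is a supermartingale with expectation at most `1`, and Markov's inequality gives
`η S_T - η² V_T < log (1/δ)` with probability at least `1 - δ`.
-/

open MeasureTheory Finset

theorem Real.exp_le_one_add_add_sq {x : ℝ} (hx : |x| ≤ 1) : Real.exp x ≤ 1 + x + x ^ 2 := by
  linarith [(abs_le.1 (Real.abs_exp_sub_one_sub_id_le hx)).2]

variable {Ω : Type*} {m m0 : MeasurableSpace Ω} {P : Measure Ω}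

theorem integrable_exp_mul_of_ae_le [IsFiniteMeasure P] {Y : Ω → ℝ}
    (hYm : AEStronglyMeasurable Y P) {R η : ℝ} (hYR : ∀ᵐ ω ∂P, Y ω ≤ R) (hη : 0 ≤ η) :
    Integrable (fun ω => Real.exp (η * Y ω)) P := by
  refine .of_bound (Real.continuous_exp.comp_aestronglyMeasurable (hYm.const_mul η))
    (Real.exp (η * R)) ?_
  filter_upwards [hYR] with ω hω
  rw [Real.norm_eq_abs, Real.abs_exp, Real.exp_le_exp]
  exact mul_le_mul_of_nonneg_left hω hη

theorem condExp_exp_mul_le_one_add_mul_condExp_sq [IsFiniteMeasure P] (hm : m ≤ m0)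
    {Y : Ω → ℝ} (hYm : AEStronglyMeasurable Y P) {R η : ℝ} (hYR : ∀ᵐ ω ∂P, |Y ω| ≤ R)
    (hη : 0 ≤ η) (hηR : η * R ≤ 1) (hY0 : P[Y | m] =ᵐ[P] 0) :
    P[fun ω => Real.exp (η * Y ω) | m] ≤ᵐ[P] fun ω => 1 + η ^ 2 * P[fun ω => Y ω ^ 2 | m] ω := by
  have hY : Integrable Y P := .of_bound hYm R (by simpa using hYR)
  have hY2 : Integrable (fun ω => Y ω ^ 2) P := by
    refine .of_bound (hYm.pow 2) (R ^ 2) ?_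
    filter_upwards [hYR] with ω hω
    simpa [abs_pow] using pow_le_pow_left₀ (abs_nonneg _) hω 2
  have hexp := integrable_exp_mul_of_ae_le hYm (hYR.mono fun ω hω => (abs_le.1 hω).2) hη
  have hquad : Integrable (fun ω => 1 + η * Y ω + η ^ 2 * Y ω ^ 2) P :=
    ((integrable_const 1).add (hY.const_mul η)).add (hY2.const_mul (η ^ 2))
  have hpt : (fun ω => Real.exp (η * Y ω)) ≤ᵐ[P] fun ω => 1 + η * Y ω + η ^ 2 * Y ω ^ 2 := by
    filter_upwards [hYR] with ω hω
    have hηY : |η * Y ω| ≤ 1 := by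
      rw [abs_mul, abs_of_nonneg hη]
      nlinarith [abs_nonneg (Y ω)]
    simpa [mul_pow] using Real.exp_le_one_add_add_sq hηY
  have hlin : P[fun ω => 1 + η * Y ω + η ^ 2 * Y ω ^ 2 | m] =ᵐ[P]
      fun ω => 1 + η * P[Y | m] ω + η ^ 2 * P[fun ω => Y ω ^ 2 | m] ω := by
    have hηY := hY.smul η
    have hηY2 := hY2.smul (η ^ 2)
    filter_upwards [condExp_add ((integrable_const 1).add hηY) hηY2 m,
      condExp_add (integrable_const 1) hηY m,
      condExp_smul (μ := P) η Y m, condExp_smul (μ := P) (η ^ 2) (fun ω => Y ω ^ 2) m]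
      with ω h1 h2 h3 h4
    change P[((fun _ => 1) + η • Y) + η ^ 2 • (fun ω => Y ω ^ 2) | m] ω = _
    rw [h1, Pi.add_apply, h2, Pi.add_apply, condExp_const hm, h3, h4]
    rfl
  filter_upwards [condExp_mono (m := m) hexp hquad hpt, hlin, hY0] with ω hmono hlin hY0
  simpa [hlin, hY0] using hmono

theorem ofReal_one_sub_le_measure_lt_one_div [IsProbabilityMeasure P] {W : Ω → ℝ}
    (hWm : Measurable W) (hW0 : 0 ≤ᵐ[P] W) (hWi : Integrable W P) (hW1 : ∫ ω, W ω ∂P ≤ 1)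
    {δ : ℝ} (hδ : 0 < δ) :
    ENNReal.ofReal (1 - δ) ≤ P {ω | W ω < 1 / δ} := by
  have hmarkov : P.real {ω | 1 / δ ≤ W ω} ≤ δ := by
    have := (mul_meas_ge_le_integral_of_nonneg hW0 hWi (1 / δ)).trans hW1
    rwa [one_div, inv_mul_le_iff₀ hδ, mul_one, ← one_div] at this
  rw [ENNReal.ofReal_le_iff_le_toReal (measure_ne_top _ _), ← measureReal_def]
  have hcompl : {ω | W ω < 1 / δ} = {ω | 1 / δ ≤ W ω}ᶜ := by ext; simp
  rw [hcompl, probReal_compl_eq_one_sub (measurableSet_le measurable_const hWm)]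
  linarith

noncomputable def predictableQuadVar (P : Measure Ω) (ℱ : Filtration ℕ m0) (X : ℕ → Ω → ℝ)
    (n : ℕ) (ω : Ω) : ℝ :=
  ∑ t ∈ Icc 1 n, P[fun ω' => X t ω' ^ 2 | ℱ (t - 1)] ω

noncomputable def freedmanExp (P : Measure Ω) (ℱ : Filtration ℕ m0) (X : ℕ → Ω → ℝ) (η : ℝ)
    (n : ℕ) (ω : Ω) : ℝ :=
  Real.exp (η * ∑ t ∈ Icc 1 n, X t ω - η ^ 2 * predictableQuadVar P ℱ X n ω)

section Freedman

variable {ℱ : Filtration ℕ m0} {X : ℕ → Ω → ℝ}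

theorem stronglyMeasurable_predictableQuadVar (n : ℕ) :
    StronglyMeasurable[ℱ (n - 1)] (predictableQuadVar P ℱ X n) := by
  unfold predictableQuadVar
  refine Finset.stronglyMeasurable_fun_sum _ fun t ht => ?_
  exact stronglyMeasurable_condExp.mono (ℱ.mono (by have := (mem_Icc.1 ht).2; omega))

theorem predictableQuadVar_nonneg (n : ℕ) : 0 ≤ᵐ[P] predictableQuadVar P ℱ X n := by
  filter_upwards [ae_all_iff.2 fun t => condExp_nonneg (μ := P) (m := ℱ (t - 1))
    (f := fun ω => X t ω ^ 2) (ae_of_all _ fun ω => sq_nonneg (X t ω))] with ω hω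
  exact Finset.sum_nonneg fun t _ => hω t

theorem predictableQuadVar_succ (n : ℕ) (ω : Ω) :
    predictableQuadVar P ℱ X (n + 1) ω =
      predictableQuadVar P ℱ X n ω + P[fun ω' => X (n + 1) ω' ^ 2 | ℱ n] ω :=
  Finset.sum_Icc_succ_top (Nat.le_add_left 1 n) _

theorem stronglyMeasurable_sum_Icc (hX : Adapted ℱ X) (n : ℕ) :
    StronglyMeasurable[ℱ n] fun ω => ∑ t ∈ Icc 1 n, X t ω :=
  Finset.stronglyMeasurable_fun_sum _ fun t ht =>
    ((hX t).mono (ℱ.mono (mem_Icc.1 ht).2) le_rfl).stronglyMeasurable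

theorem stronglyAdapted_freedmanExp (hX : Adapted ℱ X) (η : ℝ) :
    StronglyAdapted ℱ (freedmanExp P ℱ X η) := by
  intro n
  refine Real.continuous_exp.comp_stronglyMeasurable (.sub (.const_mul ?_ η) (.const_mul ?_ _))
  · exact stronglyMeasurable_sum_Icc hX n
  · exact (stronglyMeasurable_predictableQuadVar n).mono (ℱ.mono (Nat.sub_le n 1))

theorem integrable_freedmanExp [IsFiniteMeasure P] (hX : Adapted ℱ X) {R η : ℝ}
    (hXR : ∀ t, ∀ᵐ ω ∂P, |X t ω| ≤ R) (hη : 0 ≤ η) (n : ℕ) :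
    Integrable (freedmanExp P ℱ X η n) P := by
  refine .of_bound ((stronglyAdapted_freedmanExp hX η n).mono (ℱ.le n)).aestronglyMeasurable
    (Real.exp (η * (n * R))) ?_
  filter_upwards [predictableQuadVar_nonneg (ℱ := ℱ) (X := X) n, ae_all_iff.2 hXR] with ω hV hXR
  have hS : ∑ t ∈ Icc 1 n, X t ω ≤ n * R :=
    (Finset.sum_le_sum fun t _ => (abs_le.1 (hXR t)).2).trans_eq (by simp)
  rw [Real.norm_eq_abs, freedmanExp, Real.abs_exp, Real.exp_le_exp]
  have hV' : 0 ≤ η ^ 2 * predictableQuadVar P ℱ X n ω := mul_nonneg (sq_nonneg η) hV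
  linarith [mul_le_mul_of_nonneg_left hS hη]

theorem condExp_freedmanExp_succ_le [IsFiniteMeasure P] (hX : Adapted ℱ X) {R η : ℝ}
    (hXR : ∀ t, ∀ᵐ ω ∂P, |X t ω| ≤ R) (hη : 0 ≤ η) (hηR : η * R ≤ 1) (n : ℕ)
    (hX0 : P[X (n + 1) | ℱ n] =ᵐ[P] 0) :
    P[freedmanExp P ℱ X η (n + 1) | ℱ n] ≤ᵐ[P] freedmanExp P ℱ X η n := by
  set c := P[fun ω => X (n + 1) ω ^ 2 | ℱ n] with hc
  set G : Ω → ℝ := fun ω =>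
    Real.exp (η * ∑ t ∈ Icc 1 n, X t ω - η ^ 2 * predictableQuadVar P ℱ X (n + 1) ω)
  set E : Ω → ℝ := fun ω => Real.exp (η * X (n + 1) ω)
  have hXm : AEStronglyMeasurable (X (n + 1)) P :=
    ((hX (n + 1)).mono (ℱ.le _) le_rfl).aestronglyMeasurable
  have hsplit : freedmanExp P ℱ X η (n + 1) = G * E := by
    ext ω
    simp only [freedmanExp, Pi.mul_apply, G, E, ← Real.exp_add,
      Finset.sum_Icc_succ_top (Nat.le_add_left 1 n)]
    congr 1
    ring
  have hGm : StronglyMeasurable[ℱ n] G :=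
    Real.continuous_exp.comp_stronglyMeasurable (((stronglyMeasurable_sum_Icc hX n).const_mul η).sub
      ((stronglyMeasurable_predictableQuadVar (n + 1)).const_mul _))
  have hE : Integrable E P :=
    integrable_exp_mul_of_ae_le hXm ((hXR (n + 1)).mono fun ω hω => (abs_le.1 hω).2) hη
  have hmgf := condExp_exp_mul_le_one_add_mul_condExp_sq (ℱ.le n) hXm (hXR (n + 1)) hη hηR hX0
  rw [hsplit]
  filter_upwards [condExp_mul_of_stronglyMeasurable_left hGm
    (hsplit ▸ integrable_freedmanExp hX hXR hη (n + 1)) hE, hmgf] with ω hGE hmgf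
  calc P[G * E | ℱ n] ω = G ω * P[E | ℱ n] ω := hGE
    _ ≤ G ω * (1 + η ^ 2 * c ω) := mul_le_mul_of_nonneg_left hmgf (Real.exp_pos _).le
    _ ≤ G ω * Real.exp (η ^ 2 * c ω) :=
      mul_le_mul_of_nonneg_left (by linarith [Real.add_one_le_exp (η ^ 2 * c ω)]) (Real.exp_pos _).le
    _ = freedmanExp P ℱ X η n ω := by
      rw [freedmanExp, ← Real.exp_add, predictableQuadVar_succ, ← hc]
      congr 1
      ring

theorem supermartingale_freedmanExp [IsFiniteMeasure P] (hX : Adapted ℱ X) {R η : ℝ}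
    (hXR : ∀ t, ∀ᵐ ω ∂P, |X t ω| ≤ R) (hη : 0 ≤ η) (hηR : η * R ≤ 1)
    (hX0 : ∀ t, P[X t | ℱ (t - 1)] =ᵐ[P] 0) :
    Supermartingale (freedmanExp P ℱ X η) ℱ P :=
  supermartingale_nat (stronglyAdapted_freedmanExp hX η) (integrable_freedmanExp hX hXR hη)
    fun n => condExp_freedmanExp_succ_le hX hXR hη hηR n (hX0 (n + 1))

theorem integral_freedmanExp_le_one [IsProbabilityMeasure P] (hX : Adapted ℱ X) {R η : ℝ}
    (hXR : ∀ t, ∀ᵐ ω ∂P, |X t ω| ≤ R) (hη : 0 ≤ η) (hηR : η * R ≤ 1)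
    (hX0 : ∀ t, P[X t | ℱ (t - 1)] =ᵐ[P] 0) (n : ℕ) :
    ∫ ω, freedmanExp P ℱ X η n ω ∂P ≤ 1 := by
  have := (supermartingale_freedmanExp hX hXR hη hηR hX0).setIntegral_le (Nat.zero_le n)
    MeasurableSet.univ
  simpa [freedmanExp, predictableQuadVar] using this

end Freedman

/-- Freedman's inequality: there is an absolute constant C such that for any bounded
martingale difference sequence {X_t} (|X_t| ≤ R a.s., E[X_t | F_{t-1}] = 0) and any
η ∈ (0, 1/R), δ ∈ (0,1), with probability at least 1 − δ,
Σ_{t=1}^T X_t ≤ C (η Σ_{t=1}^T E[X_t² | F_{t-1}] + log(1/δ)/η). -/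
theorem stmt_15 :
    ∃ C : ℝ, 0 < C ∧
      ∀ (Ω : Type) (m : MeasurableSpace Ω) (P : Measure Ω),
        IsProbabilityMeasure P →
        ∀ (ℱ : Filtration ℕ m) (X : ℕ → Ω → ℝ) (T : ℕ) (R : ℝ),
          0 < R →
          Adapted ℱ X →
          (∀ t, P[X t | ℱ (t - 1)] =ᵐ[P] 0) →
          (∀ t, ∀ᵐ ω ∂P, |X t ω| ≤ R) →
          ∀ η δ : ℝ, η ∈ Set.Ioo 0 (1 / R) → δ ∈ Set.Ioo (0 : ℝ) 1 →
            ENNReal.ofReal (1 - δ) ≤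
              P {ω | ∑ t ∈ Icc 1 T, X t ω ≤
                C * (η * ∑ t ∈ Icc 1 T, (P[fun ω' => (X t ω') ^ 2 | ℱ (t - 1)]) ω +
                  Real.log (1 / δ) / η)} := by
  refine ⟨1, one_pos, fun Ω m P _ ℱ X T R hR hX hX0 hXR η δ ⟨hη, hηR⟩ ⟨hδ, _⟩ => ?_⟩
  have hηR' : η * R ≤ 1 := by
    rw [lt_div_iff₀ hR] at hηR
    exact hηR.le
  have hWm := ((stronglyAdapted_freedmanExp (P := P) hX η T).mono (ℱ.le T)).measurable
  refine (ofReal_one_sub_le_measure_lt_one_div hWm (ae_of_all _ fun ω => (Real.exp_pos _).le)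
    (integrable_freedmanExp hX hXR hη.le T) (integral_freedmanExp_le_one hX hXR hη.le hηR' hX0 T)
    hδ).trans (measure_mono fun ω hω => ?_)
  have hlog := (Real.lt_log_iff_exp_lt (by positivity)).2 hω
  rw [Set.mem_ofPred_eq, one_mul, ← sub_le_iff_le_add', le_div_iff₀ hη]
  unfold predictableQuadVar at hlog
  linarith
end
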